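/- arXiv:2312.10691 — 2 statements merged into one kernel-verified Lean document; each statement's English description precedes it below -/
import Mathlib

section
/- Let d ≥ 2, ξ a primitive d-th root of unity, σ ∈ Sym({0,…,n+1}), and p : {0,…,n+1} → ℤ/d. The projective transformation α = diag(ξ^{p₀}, …, ξ^{p_{n+1}})·P_σ of ℙ^{n+1}(ℂ) satisfies (α ∘ ρ)² = id (ρ = coordinatewise complex conjugation) if and only if σ² = id and the function i ↦ p_i − p_{σ(i)} (mod d) is constant. Moreover, if σ has a fixed point, this constant is 0; and if σ is fixed-point-free, the constant c satisfies 2c ≡ 0 (mod d). -/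
/-!
Since `|ξ| = 1`, conjugation inverts powers of `ξ`, so `(α ∘ ρ)²` is the linear map
`x ↦ (ξ^(p_i - p_{σ i}) · x_{σ² i})_i`. Testing it on basis vectors forces `σ² = id`, and on the
all-ones vector forces `ξ^(p_i - p_{σ i})` to be independent of `i`; for a primitive `d`-th root
of unity this means `p_i - p_{σ i}` is constant mod `d`. At a fixed point the constant is
`p_j - p_j = 0`, and adding the values at `j` and `σ j` gives `2c ≡ 0`.
-/

/-- The antiholomorphic map `α ∘ ρ` on `ℂ^{n+2}` where `α = D(p)·P_σ` and `ρ` is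
coordinatewise conjugation: `(α∘ρ)(x)_i = ξ^{p_i} · conj(x_{σ(i)})`. -/
noncomputable def diagPermConj (n : ℕ) (ξ : ℂ) (p : Fin (n + 2) → ℤ)
    (σ : Equiv.Perm (Fin (n + 2))) : (Fin (n + 2) → ℂ) → (Fin (n + 2) → ℂ) :=
  fun x i => ξ ^ (p i) * (starRingEnd ℂ) (x (σ i))

theorem IsPrimitiveRoot.zpow_eq_zpow_iff_modEq {G₀ : Type*} [CommGroupWithZero G₀] {ζ : G₀}
    {k : ℕ} (h : IsPrimitiveRoot ζ k) (hζ : ζ ≠ 0) {a b : ℤ} : ζ ^ a = ζ ^ b ↔ a ≡ b [ZMOD k] := by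
  rw [Int.modEq_comm, Int.modEq_iff_dvd, ← h.zpow_eq_one_iff_dvd, zpow_sub₀ hζ,
    div_eq_one_iff_eq (zpow_ne_zero _ hζ), eq_comm]

theorem Equiv.Perm.mul_self_eq_one_iff_involutive {α : Type*} (σ : Equiv.Perm α) :
    σ * σ = 1 ↔ Function.Involutive σ := by
  simp [Equiv.Perm.ext_iff, Function.Involutive]

section diagPermConj

variable {n : ℕ} {ξ : ℂ} {p : Fin (n + 2) → ℤ} {σ : Equiv.Perm (Fin (n + 2))}

theorem diagPermConj_diagPermConj (hξ : ‖ξ‖ = 1) (x : Fin (n + 2) → ℂ) (i : Fin (n + 2)) :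
    diagPermConj n ξ p σ (diagPermConj n ξ p σ x) i = ξ ^ (p i - p (σ i)) * x (σ (σ i)) := by
  have hξ0 : ξ ≠ 0 := norm_ne_zero_iff.mp (by rw [hξ]; exact one_ne_zero)
  simp only [diagPermConj, map_mul, map_zpow₀, Complex.conj_conj, ← Complex.inv_eq_conj hξ,
    inv_zpow', zpow_sub₀ hξ0, div_eq_mul_inv, zpow_neg, mul_assoc]

theorem diagPermConj_sq_eq_smul_iff (hξ : ‖ξ‖ = 1) :
    (∃ c : ℂ, c ≠ 0 ∧ ∀ (x : Fin (n + 2) → ℂ) (i : Fin (n + 2)),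
        diagPermConj n ξ p σ (diagPermConj n ξ p σ x) i = c * x i) ↔
      Function.Involutive σ ∧ ∃ m : ℤ, ∀ i, ξ ^ (p i - p (σ i)) = ξ ^ m := by
  have hξ0 : ξ ≠ 0 := norm_ne_zero_iff.mp (by rw [hξ]; exact one_ne_zero)
  simp only [diagPermConj_diagPermConj hξ]
  constructor
  · rintro ⟨c, -, H⟩
    have hσ : Function.Involutive σ := fun i => by
      by_contra hne
      have h := H (Pi.single (σ (σ i)) 1) i
      rw [Pi.single_eq_same, Pi.single_eq_of_ne' hne, mul_one, mul_zero] at h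
      exact zpow_ne_zero _ hξ0 h
    have hc : ∀ i, ξ ^ (p i - p (σ i)) = c := fun i => by
      simpa using H (fun _ => 1) i
    exact ⟨hσ, p 0 - p (σ 0), fun i => (hc i).trans (hc 0).symm⟩
  · rintro ⟨hσ, m, hm⟩
    exact ⟨ξ ^ m, zpow_ne_zero _ hξ0, fun x i => by rw [hσ i, hm i]⟩

end diagPermConj

section ModEq

variable {α : Type*} {p : α → ℤ} {σ : α → α} {d m : ℤ}

theorem modEq_zero_of_sub_modEq_of_fixed (hm : ∀ i, p i - p (σ i) ≡ m [ZMOD d]) {j : α}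
    (hj : σ j = j) : m ≡ 0 [ZMOD d] := by
  simpa [hj] using (hm j).symm

theorem two_mul_modEq_zero_of_sub_modEq (hσ : Function.Involutive σ)
    (hm : ∀ i, p i - p (σ i) ≡ m [ZMOD d]) (j : α) : 2 * m ≡ 0 [ZMOD d] := by
  have h := ((hm j).add (hm (σ j))).symm
  rwa [hσ j, sub_add_sub_cancel, sub_self, ← two_mul] at h

end ModEq

/-- `(α ∘ ρ)²` is the identity as a projective transformation (i.e. a nonzero scalar as a
linear map) iff `σ² = id` and `i ↦ p_i − p_{σ(i)}` is constant mod `d`; moreover this constant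
is `0 (mod d)` if `σ` has a fixed point, and satisfies `2c ≡ 0 (mod d)` if `σ` is
fixed-point-free. -/
theorem stmt11 (n d : ℕ) (hd : 2 ≤ d) (ξ : ℂ) (hξ : IsPrimitiveRoot ξ d)
    (σ : Equiv.Perm (Fin (n + 2))) (p : Fin (n + 2) → ℤ) :
    ((∃ c : ℂ, c ≠ 0 ∧ ∀ (x : Fin (n + 2) → ℂ) (i : Fin (n + 2)),
        diagPermConj n ξ p σ (diagPermConj n ξ p σ x) i = c * x i) ↔
      (σ * σ = 1 ∧ ∃ m : ℤ, ∀ i : Fin (n + 2), p i - p (σ i) ≡ m [ZMOD (d : ℤ)])) ∧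
    (∀ m : ℤ,
      (∃ c : ℂ, c ≠ 0 ∧ ∀ (x : Fin (n + 2) → ℂ) (i : Fin (n + 2)),
        diagPermConj n ξ p σ (diagPermConj n ξ p σ x) i = c * x i) →
      (∀ i : Fin (n + 2), p i - p (σ i) ≡ m [ZMOD (d : ℤ)]) →
      ((∃ j : Fin (n + 2), σ j = j) → m ≡ 0 [ZMOD (d : ℤ)]) ∧
      ((∀ j : Fin (n + 2), σ j ≠ j) → 2 * m ≡ 0 [ZMOD (d : ℤ)])) := by
  have hd0 : d ≠ 0 := by omega
  have hξ1 : ‖ξ‖ = 1 := hξ.norm'_eq_one hd0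
  have hsq := diagPermConj_sq_eq_smul_iff (p := p) (σ := σ) hξ1
  simp only [hξ.zpow_eq_zpow_iff_modEq (hξ.ne_zero hd0)] at hsq
  refine ⟨by rw [hsq, Equiv.Perm.mul_self_eq_one_iff_involutive], fun m hscalar hm => ⟨?_, ?_⟩⟩
  · rintro ⟨j, hj⟩
    exact modEq_zero_of_sub_modEq_of_fixed hm hj
  · intro _
    exact two_mul_modEq_zero_of_sub_modEq (hsq.mp hscalar).1 hm 0
end

section
/- Let d ≥ 1 be odd and x₀, x₁, x₂ ∈ ℝ not all zero with x₀^d + x₁^d + x₂^d = 0, and also y₀, y₁, y₂ ∈ ℝ not all zero with y₀^d + y₁^d + y₂^d = 0. If [x₁ : x₂] = [y₁ : y₂] in ℝP¹ then [x₀ : x₁ : x₂] = [y₀ : y₁ : y₂] in ℝP². Consequently, the real locus { [x₀ : x₁ : x₂] ∈ ℝP² : x₀^d + x₁^d + x₂^d = 0 } is homeomorphic to ℝP¹ via projection to [x₁ : x₂]. -/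
/-! Since `d` is odd, `t ↦ t ^ d` is a homeomorphism of `ℝ`, so on the Fermat curve
`x₀ = (-(x₁ ^ d + x₂ ^ d)) ^ (1 / d)` is a continuous function of `(x₁, x₂)`, homogeneous of
degree one. The resulting lift `(x₁, x₂) ↦ (x₀, x₁, x₂)` descends to a continuous section
`ℝP¹ → ℝP²` of the projection `[x₀ : x₁ : x₂] ↦ [x₁ : x₂]` on the locus. The projection is
continuous on the locus because `ℝⁿ ∖ 0 → ℝPⁿ⁻¹` is an open quotient map, and an open quotient
map stays one after restriction to a preimage. -/

open Projectivization
open scoped LinearAlgebra.Projectivization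

/-- Quotient topology on real projective space. -/
noncomputable instance projSpaceTopology (n : ℕ) :
    TopologicalSpace (Projectivization ℝ (Fin n → ℝ)) :=
  instTopologicalSpaceQuotient

/-- The real locus of the Fermat curve `x₀^d + x₁^d + x₂^d = 0` in `ℝP²`. -/
def fermatCurveLocus (d : ℕ) : Set (Projectivization ℝ (Fin 3 → ℝ)) :=
  {p | p.rep 0 ^ d + p.rep 1 ^ d + p.rep 2 ^ d = 0}

namespace Odd

variable {d : ℕ}

theorem pow_left_surjective (hd : Odd d) : Function.Surjective fun t : ℝ => t ^ d := by
  have hd0 : d ≠ 0 := hd.pos.ne'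
  have h_bot : Filter.Tendsto (fun t : ℝ => t ^ d) Filter.atBot Filter.atBot := by
    have : (fun t : ℝ => t ^ d) = fun t => -(-t) ^ d := by
      funext t; rw [hd.neg_pow, neg_neg]
    rw [this]
    exact Filter.tendsto_neg_atTop_atBot.comp
      ((Filter.tendsto_pow_atTop hd0).comp Filter.tendsto_neg_atBot_atTop)
  exact (continuous_pow d).surjective (Filter.tendsto_pow_atTop hd0) h_bot

noncomputable def powOrderIso (hd : Odd d) : ℝ ≃o ℝ :=
  StrictMono.orderIsoOfSurjective _ hd.strictMono_pow hd.pow_left_surjective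

@[simp]
theorem powOrderIso_symm_pow (hd : Odd d) (t : ℝ) : hd.powOrderIso.symm (t ^ d) = t :=
  hd.powOrderIso.symm_apply_apply t

@[simp]
theorem pow_powOrderIso_symm (hd : Odd d) (t : ℝ) : hd.powOrderIso.symm t ^ d = t :=
  hd.powOrderIso.apply_symm_apply t

end Odd

namespace Projectivization

variable {K V W : Type*} [Field K] [AddCommGroup V] [Module K V] [AddCommGroup W] [Module K W]

theorem mk_apply_eq_of_mk_eq (f : V →ₗ[K] W) {v w : V} {hv : v ≠ 0} {hw : w ≠ 0}
    (h : mk K v hv = mk K w hw) (hfv : f v ≠ 0) (hfw : f w ≠ 0) :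
    mk K (f v) hfv = mk K (f w) hfw := by
  obtain ⟨a, rfl⟩ := (mk_eq_mk_iff' K v w hv hw).1 h
  exact (mk_eq_mk_iff' K _ _ hfv hfw).2 ⟨a, (f.map_smul a w).symm⟩

end Projectivization

section RealProjectiveSpace

variable {n : ℕ}

theorem continuous_projectivization_mk {X : Type*} [TopologicalSpace X] {f : X → Fin n → ℝ}
    (hf : Continuous f) (hf0 : ∀ x, f x ≠ 0) : Continuous fun x => mk ℝ (f x) (hf0 x) :=
  continuous_quot_mk.comp (hf.subtype_mk hf0)

theorem isOpenQuotientMap_projectivization_mk' :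
    IsOpenQuotientMap (mk' ℝ : {v : Fin n → ℝ // v ≠ 0} → ℙ ℝ (Fin n → ℝ)) := by
  refine ⟨Quotient.mk''_surjective, continuous_quot_mk, fun U hU => ?_⟩
  -- The saturation of `U` is the union of its translates by the scalings `v ↦ t • v`.
  have h_sat : mk' ℝ ⁻¹' (mk' ℝ '' U) =
      ⋃ t : ℝˣ, (fun v : {v : Fin n → ℝ // v ≠ 0} =>
        (⟨(t : ℝ) • v.1, smul_ne_zero t.ne_zero v.2⟩ : {v : Fin n → ℝ // v ≠ 0})) ⁻¹' U := by
    ext v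
    simp only [Set.mem_preimage, Set.mem_image, Set.mem_iUnion, mk'_eq_mk]
    constructor
    · rintro ⟨u, hu, h⟩
      obtain ⟨t, ht⟩ := (mk_eq_mk_iff ℝ _ _ _ _).1 h.symm
      exact ⟨t⁻¹, by convert hu; rw [← ht, Units.smul_def, smul_smul]; simp⟩
    · rintro ⟨t, ht⟩
      exact ⟨_, ht, (mk_eq_mk_iff ℝ _ _ _ _).2 ⟨t, rfl⟩⟩
  have h_open : IsOpen (mk' ℝ ⁻¹' (mk' ℝ '' U)) := h_sat ▸ isOpen_iUnion fun t =>
    hU.preimage ((continuous_subtype_val.const_smul (t : ℝ)).subtype_mk _)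
  exact isQuotientMap_quotient_mk'.isOpen_preimage.1 h_open

end RealProjectiveSpace

def fermatForm (d : ℕ) (x : Fin 3 → ℝ) : ℝ :=
  x 0 ^ d + x 1 ^ d + x 2 ^ d

theorem fermatForm_smul (d : ℕ) (t : ℝ) (x : Fin 3 → ℝ) :
    fermatForm d (t • x) = t ^ d * fermatForm d x := by
  simp only [fermatForm, Pi.smul_apply, smul_eq_mul, mul_pow]
  ring

theorem mem_fermatCurveLocus_iff (d : ℕ) (p : ℙ ℝ (Fin 3 → ℝ)) :
    p ∈ fermatCurveLocus d ↔ fermatForm d p.rep = 0 :=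
  Iff.rfl

theorem mk_mem_fermatCurveLocus_iff (d : ℕ) {x : Fin 3 → ℝ} (hx : x ≠ 0) :
    mk ℝ x hx ∈ fermatCurveLocus d ↔ fermatForm d x = 0 := by
  obtain ⟨t, ht⟩ := (mk_eq_mk_iff ℝ _ x (rep_nonzero _) hx).1 (mk_rep (mk ℝ x hx))
  rw [mem_fermatCurveLocus_iff, ← ht, Units.smul_def, fermatForm_smul,
    mul_eq_zero_iff_left (pow_ne_zero d t.ne_zero)]

def projLast : (Fin 3 → ℝ) →ₗ[ℝ] (Fin 2 → ℝ) where
  toFun x := ![x 1, x 2]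
  map_add' x y := by ext i; fin_cases i <;> rfl
  map_smul' t x := by ext i; fin_cases i <;> rfl

theorem projLast_ne_zero_of_fermatForm_eq_zero {d : ℕ} {x : Fin 3 → ℝ} (hx : x ≠ 0)
    (h : fermatForm d x = 0) : projLast x ≠ 0 := by
  intro h12
  have h1 : x 1 = 0 := congrFun h12 0
  have h2 : x 2 = 0 := congrFun h12 1
  rcases eq_or_ne d 0 with rfl | hd
  · norm_num [fermatForm] at h
  have h0 : x 0 = 0 := by simpa [fermatForm, h1, h2, hd] using h
  exact hx (by ext i; fin_cases i <;> assumption)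

section FermatLift

variable {d : ℕ} (hd : Odd d)

noncomputable def fermatLift (w : Fin 2 → ℝ) : Fin 3 → ℝ :=
  ![hd.powOrderIso.symm (-(w 0 ^ d + w 1 ^ d)), w 0, w 1]

theorem projLast_fermatLift (w : Fin 2 → ℝ) : projLast (fermatLift hd w) = w := by
  ext i; fin_cases i <;> rfl

theorem fermatLift_ne_zero {w : Fin 2 → ℝ} (hw : w ≠ 0) : fermatLift hd w ≠ 0 := by
  intro h
  apply hw
  rw [← projLast_fermatLift hd w, h, map_zero]

theorem fermatForm_fermatLift (w : Fin 2 → ℝ) : fermatForm d (fermatLift hd w) = 0 := by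
  simp only [fermatForm, fermatLift, Matrix.cons_val_zero, Matrix.cons_val_one,
    Matrix.cons_val_two, Matrix.head_cons, Matrix.tail_cons, Odd.pow_powOrderIso_symm]
  ring

theorem fermatLift_projLast {x : Fin 3 → ℝ} (h : fermatForm d x = 0) :
    fermatLift hd (projLast x) = x := by
  have h0 : -(x 1 ^ d + x 2 ^ d) = x 0 ^ d := by
    unfold fermatForm at h; linarith
  ext i; fin_cases i
  · simp [fermatLift, projLast, h0]
  · rfl
  · rfl

theorem fermatLift_smul (t : ℝ) (w : Fin 2 → ℝ) :
    fermatLift hd (t • w) = t • fermatLift hd w := by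
  have h : fermatForm d (t • fermatLift hd w) = 0 := by
    rw [fermatForm_smul, fermatForm_fermatLift, mul_zero]
  rw [← fermatLift_projLast hd h, map_smul, projLast_fermatLift]

theorem continuous_fermatLift : Continuous (fermatLift hd) := by
  refine continuous_pi fun i => ?_
  fin_cases i
  · exact hd.powOrderIso.symm.continuous.comp (by fun_prop)
  · exact continuous_apply 0
  · exact continuous_apply 1

end FermatLift

section FermatSection

variable {d : ℕ} (hd : Odd d)

noncomputable def fermatSection : ℙ ℝ (Fin 2 → ℝ) → ℙ ℝ (Fin 3 → ℝ) :=
  Projectivization.lift (fun w => mk ℝ (fermatLift hd w) (fermatLift_ne_zero hd w.2)) <| by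
    rintro ⟨v, hv⟩ ⟨w, hw⟩ t (rfl : v = t • w)
    exact (mk_eq_mk_iff' ℝ _ _ _ _).2 ⟨t, (fermatLift_smul hd t w).symm⟩

theorem fermatSection_mk {w : Fin 2 → ℝ} (hw : w ≠ 0) :
    fermatSection hd (mk ℝ w hw) = mk ℝ (fermatLift hd w) (fermatLift_ne_zero hd hw) :=
  rfl

theorem fermatSection_mem (q : ℙ ℝ (Fin 2 → ℝ)) : fermatSection hd q ∈ fermatCurveLocus d := by
  induction q using Projectivization.ind with
  | h w hw => exact (mk_mem_fermatCurveLocus_iff d _).2 (fermatForm_fermatLift hd w)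

theorem mk_eq_fermatSection {x : Fin 3 → ℝ} (hx : x ≠ 0) (h : fermatForm d x = 0)
    (hx2 : projLast x ≠ 0) : mk ℝ x hx = fermatSection hd (mk ℝ (projLast x) hx2) := by
  rw [fermatSection_mk]
  congr 1
  exact (fermatLift_projLast hd h).symm

theorem continuous_fermatSection : Continuous (fermatSection hd) :=
  continuous_quot_lift _ <| continuous_projectivization_mk
    ((continuous_fermatLift hd).comp continuous_subtype_val) _

end FermatSection

noncomputable def fermatProj {d : ℕ} (p : fermatCurveLocus d) : ℙ ℝ (Fin 2 → ℝ) :=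
  mk ℝ (projLast p.1.rep) (projLast_ne_zero_of_fermatForm_eq_zero p.1.rep_nonzero p.2)

theorem continuous_fermatProj (d : ℕ) : Continuous (fermatProj (d := d)) := by
  have hq := (isOpenQuotientMap_projectivization_mk' (n := 3)).restrictPreimage (fermatCurveLocus d)
  have hmem (v : mk' ℝ ⁻¹' fermatCurveLocus d) : fermatForm d v.1.1 = 0 :=
    (mk_mem_fermatCurveLocus_iff d v.1.2).1 v.2
  rw [← hq.continuous_comp_iff]
  convert continuous_projectivization_mk
    ((projLast.continuous_of_finiteDimensional.comp continuous_subtype_val).comp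
      continuous_subtype_val)
    (fun v => projLast_ne_zero_of_fermatForm_eq_zero v.1.2 (hmem v)) using 1
  ext v : 1
  exact mk_apply_eq_of_mk_eq projLast (mk_rep _) _ _

noncomputable def fermatCurveLocusHomeomorph {d : ℕ} (hd : Odd d) :
    fermatCurveLocus d ≃ₜ ℙ ℝ (Fin 2 → ℝ) where
  toFun := fermatProj
  invFun q := ⟨fermatSection hd q, fermatSection_mem hd q⟩
  left_inv p := Subtype.ext <|
    (mk_eq_fermatSection hd p.1.rep_nonzero p.2 _).symm.trans (mk_rep p.1)
  right_inv q := by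
    induction q using Projectivization.ind with
    | h w hw =>
      refine (mk_apply_eq_of_mk_eq projLast (mk_rep _) _ (by rwa [projLast_fermatLift])).trans ?_
      simp only [projLast_fermatLift]
  continuous_toFun := continuous_fermatProj d
  continuous_invFun := (continuous_fermatSection hd).subtype_mk _

theorem mk_eq_mk_of_mk_projLast_eq {d : ℕ} (hd : Odd d) {x y : Fin 3 → ℝ} (hx : x ≠ 0)
    (hy : y ≠ 0) (hxf : fermatForm d x = 0) (hyf : fermatForm d y = 0) (hx2 : projLast x ≠ 0)
    (hy2 : projLast y ≠ 0) (h : mk ℝ (projLast x) hx2 = mk ℝ (projLast y) hy2) :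
    mk ℝ x hx = mk ℝ y hy := by
  rw [mk_eq_fermatSection hd hx hxf hx2, mk_eq_fermatSection hd hy hyf hy2, h]

theorem stmt18_general (d : ℕ) (hdodd : Odd d) :
    (∀ (x y : Fin 3 → ℝ) (hx : x ≠ 0) (hy : y ≠ 0),
      x 0 ^ d + x 1 ^ d + x 2 ^ d = 0 →
      y 0 ^ d + y 1 ^ d + y 2 ^ d = 0 →
      ∀ (hx2 : (![x 1, x 2] : Fin 2 → ℝ) ≠ 0) (hy2 : (![y 1, y 2] : Fin 2 → ℝ) ≠ 0),
        Projectivization.mk ℝ ![x 1, x 2] hx2 = Projectivization.mk ℝ ![y 1, y 2] hy2 →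
        Projectivization.mk ℝ x hx = Projectivization.mk ℝ y hy) ∧
    (∀ p ∈ fermatCurveLocus d, (![p.rep 1, p.rep 2] : Fin 2 → ℝ) ≠ 0) ∧
    Nonempty ((fermatCurveLocus d) ≃ₜ Projectivization ℝ (Fin 2 → ℝ)) :=
  ⟨fun _ _ hx hy hxf hyf _ _ h => mk_eq_mk_of_mk_projLast_eq hdodd hx hy hxf hyf _ _ h,
    fun p hp => projLast_ne_zero_of_fermatForm_eq_zero p.rep_nonzero hp,
    ⟨fermatCurveLocusHomeomorph hdodd⟩⟩

/-- For odd `d`: two points of the Fermat locus with the same projection `[x₁ : x₂]` are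
equal, every point of the locus has `(x₁,x₂) ≠ (0,0)`, and the locus is homeomorphic
to `ℝP¹`. -/
theorem stmt18 (d : ℕ) (hd : 1 ≤ d) (hdodd : Odd d) :
    (∀ (x y : Fin 3 → ℝ) (hx : x ≠ 0) (hy : y ≠ 0),
      x 0 ^ d + x 1 ^ d + x 2 ^ d = 0 →
      y 0 ^ d + y 1 ^ d + y 2 ^ d = 0 →
      ∀ (hx2 : (![x 1, x 2] : Fin 2 → ℝ) ≠ 0) (hy2 : (![y 1, y 2] : Fin 2 → ℝ) ≠ 0),
        Projectivization.mk ℝ ![x 1, x 2] hx2 = Projectivization.mk ℝ ![y 1, y 2] hy2 →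
        Projectivization.mk ℝ x hx = Projectivization.mk ℝ y hy) ∧
    (∀ p ∈ fermatCurveLocus d, (![p.rep 1, p.rep 2] : Fin 2 → ℝ) ≠ 0) ∧
    Nonempty ((fermatCurveLocus d) ≃ₜ Projectivization ℝ (Fin 2 → ℝ)) :=
  stmt18_general d hdodd
end
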